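/- arXiv:math/0611320 — 6 statements merged into one kernel-verified Lean document; each statement's English description precedes it below -/
import Mathlib

section
/- Let D be a group with a bi-invariant partial order induced by a normal cone C, let f be a dominant element, and let g ∈ D. Then the sequence γₙ(f,g)/n converges as n → ∞, where γₙ(f,g) = inf{p ∈ ℤ : f^p ≥ g^n}. -/
/-!
Bi-invariance lets inequalities be multiplied: `f^p ≥ g^m` and `f^q ≥ g^n` give
`f^(p+q) ≥ g^(m+n)`, so `n ↦ γₙ` is subadditive and Fekete's lemma applies once `γₙ/n`
is bounded below. A dominant gives `f^m ≥ g⁻¹`, hence `f^(γₙ + mn) ≥ g^n g⁻ⁿ = 1`; and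
`f^k ≥ 1` forces `k ≥ 0`, since otherwise multiplying by `f^k` would push `γₙ` below its
infimum.
-/

open Filter

section Cone

variable {D : Type*} [Group D] {C : Set D}

theorem mul_mul_inv_mem_of_mul_inv_mem (hmul : ∀ f g, f ∈ C → g ∈ C → f * g ∈ C)
    (hconj : ∀ f h, f ∈ C → h * f * h⁻¹ ∈ C) {a b x y : D}
    (ha : a * x⁻¹ ∈ C) (hb : b * y⁻¹ ∈ C) : a * b * (x * y)⁻¹ ∈ C := by
  have key : a * (b * y⁻¹) * a⁻¹ * (a * x⁻¹) = a * b * (x * y)⁻¹ := by group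
  exact key ▸ hmul _ _ (hconj _ a hb) ha

theorem pow_succ_mul_inv_pow_succ_mem (hmul : ∀ f g, f ∈ C → g ∈ C → f * g ∈ C)
    (hconj : ∀ f h, f ∈ C → h * f * h⁻¹ ∈ C) {a x : D} (h : a * x⁻¹ ∈ C) (k : ℕ) :
    a ^ (k + 1) * (x ^ (k + 1))⁻¹ ∈ C := by
  induction k with
  | zero => simpa using h
  | succ k ih =>
    rw [pow_succ a, pow_succ x]
    exact mul_mul_inv_mem_of_mul_inv_mem hmul hconj ih h

theorem nonneg_of_zpow_mem (hmul : ∀ f g, f ∈ C → g ∈ C → f * g ∈ C) {f x : D} {p₀ k : ℤ}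
    (hleast : IsLeast {p : ℤ | f ^ p * x ∈ C} p₀) (hk : f ^ k ∈ C) : 0 ≤ k := by
  have hshift : f ^ (k + p₀) * x ∈ C := by
    simpa only [zpow_add, mul_assoc] using hmul _ _ hk hleast.1
  linarith [hleast.2 hshift]

end Cone

theorem bddBelow_range_div_of_mul_le {u : ℕ → ℝ} {c : ℝ} (h : ∀ n : ℕ, c * n ≤ u n) :
    BddBelow (Set.range fun n : ℕ => u n / n) := by
  refine ⟨min c 0, ?_⟩
  rintro _ ⟨n, rfl⟩
  rcases Nat.eq_zero_or_pos n with rfl | hn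
  · simp
  · exact (min_le_left c 0).trans ((le_div_iff₀ (by positivity)).2 (h n))

theorem relative_growth_limit_exists_general {D : Type*} [Group D] (C : Set D)
    (hmul : ∀ f g, f ∈ C → g ∈ C → f * g ∈ C)
    (hconj : ∀ f h, f ∈ C → h * f * h⁻¹ ∈ C)
    (f : D)
    (hdom : ∀ g : D, ∃ n : ℕ, f ^ n * g⁻¹ ∈ C)
    (g : D) (γ : ℕ → ℤ)
    (hγ : ∀ n : ℕ, IsLeast {p : ℤ | f ^ p * (g ^ n)⁻¹ ∈ C} (γ n)) :
    ∃ L : ℝ, Tendsto (fun n : ℕ => (γ n : ℝ) / n) atTop (nhds L) := by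
  have hsub : Subadditive (fun n : ℕ => (γ n : ℝ)) := fun m n => by
    have hprod := mul_mul_inv_mem_of_mul_inv_mem hmul hconj (hγ m).1 (hγ n).1
    rw [← zpow_add, ← pow_add] at hprod
    show (γ (m + n) : ℝ) ≤ γ m + γ n
    exact_mod_cast (hγ (m + n)).2 hprod
  obtain ⟨m, hm⟩ := hdom g⁻¹
  have hshift_nonneg : ∀ n : ℕ, 0 ≤ γ n + m * n := by
    rintro (_ | n)
    · have h0 : f ^ γ 0 ∈ C := by simpa using (hγ 0).1
      simpa using nonneg_of_zpow_mem hmul (hγ 0) h0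
    · have hpow := pow_succ_mul_inv_pow_succ_mem hmul hconj hm n
      have hprod := mul_mul_inv_mem_of_mul_inv_mem hmul hconj (hγ (n + 1)).1 hpow
      rw [inv_pow, mul_inv_cancel, inv_one, mul_one, ← pow_mul, ← zpow_natCast,
        ← zpow_add] at hprod
      exact_mod_cast nonneg_of_zpow_mem hmul (hγ 0) hprod
  have hlow : ∀ n : ℕ, -(m : ℝ) * n ≤ γ n := fun n => by
    have : (0 : ℝ) ≤ γ n + m * n := by exact_mod_cast hshift_nonneg n
    linarith
  exact ⟨hsub.lim, hsub.tendsto_lim (bddBelow_range_div_of_mul_le hlow)⟩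

/-- In a group `D` with a bi-invariant partial order induced by a normal
cone `C`, if `f` is a dominant and `g ∈ D`, then `γₙ(f,g)/n` converges as `n → ∞`,
where `γₙ(f,g) = inf{p ∈ ℤ : f^p ≥ g^n}` (assumed finite, i.e. attained as a least
element). -/
theorem relative_growth_limit_exists {D : Type*} [Group D] (C : Set D)
    (hmul : ∀ f g, f ∈ C → g ∈ C → f * g ∈ C)
    (hconj : ∀ f h, f ∈ C → h * f * h⁻¹ ∈ C)
    (hone : (1 : D) ∈ C)
    (hanti : ∀ f g : D, f * g⁻¹ ∈ C → g * f⁻¹ ∈ C → f = g)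
    (f : D) (hfC : f ∈ C) (hfne : f ≠ 1)
    (hdom : ∀ g : D, ∃ n : ℕ, f ^ n * g⁻¹ ∈ C)
    (g : D) (γ : ℕ → ℤ)
    (hγ : ∀ n : ℕ, IsLeast {p : ℤ | f ^ p * (g ^ n)⁻¹ ∈ C} (γ n)) :
    ∃ L : ℝ, Tendsto (fun n : ℕ => (γ n : ℝ) / n) atTop (nhds L) :=
  relative_growth_limit_exists_general C hmul hconj f hdom g γ hγ
end

section
/- Let D be a group with a bi-invariant partial order induced by a normal cone, and let f, g, h be dominant elements. Then γ(f,h) ≤ γ(f,g) · γ(g,h), where γ denotes the relative growth. -/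
open Filter Topology

/-!
If `g ^ m ≥ h ^ n` and `f ^ p ≥ g ^ m` then `f ^ p ≥ h ^ n`; taking `m = γₙ(g,h)` and
`p = γₘ(f,g)` gives `γₙ(f,h) ≤ γ_{γₙ(g,h)}(f,g)`. Dividing by `n` and writing the right side as
`(γₘ(f,g) / m) · (m / n)` with `m = γₙ(g,h) → ∞` (because `γ(g,h) > 0`), the limit is `γ(f,g) · γ(g,h)`.
-/

theorem mul_inv_mem_trans {D : Type*} [Group D] {C : Set D}
    (hmul : ∀ a b, a ∈ C → b ∈ C → a * b ∈ C) {a b c : D}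
    (hab : a * b⁻¹ ∈ C) (hbc : b * c⁻¹ ∈ C) : a * c⁻¹ ∈ C := by
  simpa only [mul_assoc, inv_mul_cancel_left] using hmul _ _ hab hbc

theorem tendsto_atTop_of_tendsto_div_natCast {u : ℕ → ℝ} {B : ℝ}
    (hu : Tendsto (fun n => u n / n) atTop (𝓝 B)) (hB : 0 < B) :
    Tendsto u atTop atTop := by
  refine (hu.pos_mul_atTop hB tendsto_natCast_atTop_atTop).congr' ?_
  filter_upwards [eventually_ne_atTop 0] with n hn
  field_simp

theorem le_mul_of_le_comp_of_tendsto_div {a c : ℕ → ℝ} {b : ℕ → ℕ} {A B L : ℝ}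
    (ha : Tendsto (fun m => a m / m) atTop (𝓝 A))
    (hb : Tendsto (fun n => (b n : ℝ) / n) atTop (𝓝 B)) (hB : 0 < B)
    (hc : Tendsto (fun n => c n / n) atTop (𝓝 L))
    (hle : ∀ᶠ n in atTop, c n ≤ a (b n)) : L ≤ A * B := by
  have hb_atTop : Tendsto b atTop atTop :=
    tendsto_natCast_atTop_iff.mp (tendsto_atTop_of_tendsto_div_natCast hb hB)
  refine le_of_tendsto_of_tendsto hc ((ha.comp hb_atTop).mul hb) ?_
  filter_upwards [hle, hb_atTop.eventually_ne_atTop 0, eventually_ne_atTop 0]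
    with n hcn hbn hn
  have hbn' : (b n : ℝ) ≠ 0 := Nat.cast_ne_zero.mpr hbn
  calc c n / n ≤ a (b n) / n := by gcongr
    _ = a (b n) / b n * (b n / n) := by field_simp

theorem relative_growth_submultiplicative_general {D : Type*} [Group D] (C : Set D)
    (hmul : ∀ a b, a ∈ C → b ∈ C → a * b ∈ C)
    (f g h : D)
    (γfg γgh γfh : ℕ → ℤ)
    (hγfg : ∀ n : ℕ, IsLeast {p : ℤ | f ^ p * (g ^ n)⁻¹ ∈ C} (γfg n))
    (hγgh : ∀ n : ℕ, IsLeast {p : ℤ | g ^ p * (h ^ n)⁻¹ ∈ C} (γgh n))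
    (hγfh : ∀ n : ℕ, IsLeast {p : ℤ | f ^ p * (h ^ n)⁻¹ ∈ C} (γfh n))
    (A B L : ℝ)
    (hA : Tendsto (fun n : ℕ => (γfg n : ℝ) / n) atTop (nhds A))
    (hB : Tendsto (fun n : ℕ => (γgh n : ℝ) / n) atTop (nhds B))
    (hL : Tendsto (fun n : ℕ => (γfh n : ℝ) / n) atTop (nhds L))
    (hBpos : 0 < B) :
    L ≤ A * B := by
  have hγgh_toNat : ∀ᶠ n in atTop, ((γgh n).toNat : ℤ) = γgh n := by
    filter_upwards [(tendsto_atTop_of_tendsto_div_natCast hB hBpos).eventually_ge_atTop 0]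
      with n hn
    exact Int.toNat_of_nonneg (by exact_mod_cast hn)
  refine le_mul_of_le_comp_of_tendsto_div hA (b := fun n => (γgh n).toNat) ?_ hBpos hL ?_
  · refine hB.congr' ?_
    filter_upwards [hγgh_toNat] with n hn
    congr 1
    exact_mod_cast hn.symm
  · filter_upwards [hγgh_toNat] with n hn
    have hgh : g ^ ((γgh n).toNat : ℤ) * (h ^ n)⁻¹ ∈ C := hn ▸ (hγgh n).1
    rw [zpow_natCast] at hgh
    exact_mod_cast (hγfh n).2 (mul_inv_mem_trans hmul (hγfg _).1 hgh)

/-- In a group `D` with a bi-invariant partial order induced by a normal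
cone `C`, for dominants `f, g, h` the relative growths satisfy
`γ(f,h) ≤ γ(f,g) · γ(g,h)`.  Here `γ(a,b)` is the limit of
`(inf{p ∈ ℤ : a^p ≥ b^n})/n`, and `γ > 0` is assumed (as in the paper). -/
theorem relative_growth_submultiplicative {D : Type*} [Group D] (C : Set D)
    (hmul : ∀ a b, a ∈ C → b ∈ C → a * b ∈ C)
    (hconj : ∀ a b, a ∈ C → b * a * b⁻¹ ∈ C)
    (hone : (1 : D) ∈ C)
    (hanti : ∀ a b : D, a * b⁻¹ ∈ C → b * a⁻¹ ∈ C → a = b)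
    (f g h : D)
    (hf : f ∈ C ∧ f ≠ 1 ∧ ∀ x : D, ∃ n : ℕ, f ^ n * x⁻¹ ∈ C)
    (hg : g ∈ C ∧ g ≠ 1 ∧ ∀ x : D, ∃ n : ℕ, g ^ n * x⁻¹ ∈ C)
    (hh : h ∈ C ∧ h ≠ 1 ∧ ∀ x : D, ∃ n : ℕ, h ^ n * x⁻¹ ∈ C)
    (γfg γgh γfh : ℕ → ℤ)
    (hγfg : ∀ n : ℕ, IsLeast {p : ℤ | f ^ p * (g ^ n)⁻¹ ∈ C} (γfg n))
    (hγgh : ∀ n : ℕ, IsLeast {p : ℤ | g ^ p * (h ^ n)⁻¹ ∈ C} (γgh n))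
    (hγfh : ∀ n : ℕ, IsLeast {p : ℤ | f ^ p * (h ^ n)⁻¹ ∈ C} (γfh n))
    (A B L : ℝ)
    (hA : Tendsto (fun n : ℕ => (γfg n : ℝ) / n) atTop (nhds A))
    (hB : Tendsto (fun n : ℕ => (γgh n : ℝ) / n) atTop (nhds B))
    (hL : Tendsto (fun n : ℕ => (γfh n : ℝ) / n) atTop (nhds L))
    (hApos : 0 < A) (hBpos : 0 < B) (hLpos : 0 < L) :
    L ≤ A * B :=
  relative_growth_submultiplicative_general C hmul f g h γfg γgh γfh hγfg hγgh hγfh A B L hA hB hL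
    hBpos
end

section
/- For a dominant f and any element g of a partially ordered group, the relative growth γ(f,g) equals γ*(f,g) := inf{r/s : f^r ≥ g^s, r ∈ ℤ, s ∈ ℕ}. -/
/-!
Writing `a ≤ b` for `b * a⁻¹ ∈ C`, bi-invariance lets inequalities be multiplied, so
`g ^ s ≤ f ^ r` gives `g ^ (k * s) ≤ f ^ (k * r)` and hence `γ (k * s) ≤ k * r`; along the
subsequence `k * s` this yields `γ ≤ r / s`. Conversely each `γ n / n` itself belongs to the
set of ratios `r / s`, so every lower bound of that set is a lower bound of the limit.
-/

open Filter Topology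

section ConeOrder

variable {D : Type*} [Group D] {C : Set D}

theorem mul_mul_inv_mem_of_mul_inv_mem_s6 (hmul : ∀ a b, a ∈ C → b ∈ C → a * b ∈ C)
    (hconj : ∀ a b, a ∈ C → b * a * b⁻¹ ∈ C) {a b c d : D}
    (hab : a * b⁻¹ ∈ C) (hcd : c * d⁻¹ ∈ C) : a * c * (b * d)⁻¹ ∈ C := by
  have h := hmul _ _ (hconj _ a hcd) hab
  rwa [show a * (c * d⁻¹) * a⁻¹ * (a * b⁻¹) = a * c * (b * d)⁻¹ by group] at h

theorem pow_mul_pow_inv_mem_of_mul_inv_mem (hmul : ∀ a b, a ∈ C → b ∈ C → a * b ∈ C)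
    (hconj : ∀ a b, a ∈ C → b * a * b⁻¹ ∈ C) (hone : (1 : D) ∈ C) {a b : D}
    (hab : a * b⁻¹ ∈ C) (k : ℕ) : a ^ k * (b ^ k)⁻¹ ∈ C := by
  induction k with
  | zero => simpa using hone
  | succ k ih =>
    rw [pow_succ, pow_succ]
    exact mul_mul_inv_mem_of_mul_inv_mem_s6 hmul hconj ih hab

end ConeOrder

theorem le_div_of_tendsto_div_of_le_mul {u : ℕ → ℝ} {A r : ℝ} {s : ℕ} (hs : 0 < s)
    (hA : Tendsto (fun n : ℕ => u n / n) atTop (𝓝 A)) (hu : ∀ k : ℕ, u (k * s) ≤ k * r) :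
    A ≤ r / s := by
  have hks : Tendsto (fun k : ℕ => k * s) atTop atTop :=
    (strictMono_mul_right_of_pos hs).tendsto_atTop
  refine le_of_tendsto (hA.comp hks) ?_
  filter_upwards [eventually_gt_atTop 0] with k hk
  have hk' : (0 : ℝ) < k := by exact_mod_cast hk
  calc u (k * s) / ((k * s : ℕ) : ℝ) ≤ k * r / (k * s) := by
        push_cast
        gcongr
        exact hu k
    _ = r / s := mul_div_mul_left _ _ hk'.ne'

theorem relative_growth_eq_gamma_star_general {D : Type*} [Group D] (C : Set D)
    (hmul : ∀ a b, a ∈ C → b ∈ C → a * b ∈ C)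
    (hconj : ∀ a b, a ∈ C → b * a * b⁻¹ ∈ C)
    (hone : (1 : D) ∈ C)
    (f : D)
    (g : D) (γ : ℕ → ℤ)
    (hγ : ∀ n : ℕ, IsLeast {p : ℤ | f ^ p * (g ^ n)⁻¹ ∈ C} (γ n))
    (A : ℝ)
    (hA : Tendsto (fun n : ℕ => (γ n : ℝ) / n) atTop (nhds A)) :
    A = sInf {x : ℝ | ∃ r : ℤ, ∃ s : ℕ, 0 < s ∧
      f ^ r * ((g ^ s : D))⁻¹ ∈ C ∧ x = (r : ℝ) / s} := by
  have hratio (n : ℕ) (hn : 0 < n) : (γ n : ℝ) / n ∈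
      {x : ℝ | ∃ r : ℤ, ∃ s : ℕ, 0 < s ∧ f ^ r * ((g ^ s : D))⁻¹ ∈ C ∧ x = (r : ℝ) / s} :=
    ⟨γ n, n, hn, (hγ n).1, rfl⟩
  refine (IsGLB.csInf_eq ⟨?_, fun b hb => ?_⟩ ⟨_, hratio 1 one_pos⟩).symm
  · rintro _ ⟨r, s, hs, hrs, rfl⟩
    refine le_div_of_tendsto_div_of_le_mul hs hA fun k => ?_
    have hpow := pow_mul_pow_inv_mem_of_mul_inv_mem hmul hconj hone hrs k
    rw [← zpow_natCast, ← zpow_mul, ← pow_mul, mul_comm s, mul_comm r] at hpow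
    exact_mod_cast (hγ (k * s)).2 hpow
  · exact ge_of_tendsto hA (eventually_gt_atTop 0 |>.mono fun n hn => hb (hratio n hn))

/-- For a dominant `f` and any `g` in a group with a bi-invariant partial
order induced by a normal cone, the relative growth
`γ(f,g) = lim γₙ(f,g)/n` equals `γ*(f,g) = inf{r/s : f^r ≥ g^s, r ∈ ℤ, s ∈ ℕ}`. -/
theorem relative_growth_eq_gamma_star {D : Type*} [Group D] (C : Set D)
    (hmul : ∀ a b, a ∈ C → b ∈ C → a * b ∈ C)
    (hconj : ∀ a b, a ∈ C → b * a * b⁻¹ ∈ C)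
    (hone : (1 : D) ∈ C)
    (hanti : ∀ a b : D, a * b⁻¹ ∈ C → b * a⁻¹ ∈ C → a = b)
    (f : D) (hfC : f ∈ C) (hfne : f ≠ 1)
    (hdom : ∀ x : D, ∃ n : ℕ, f ^ n * x⁻¹ ∈ C)
    (g : D) (γ : ℕ → ℤ)
    (hγ : ∀ n : ℕ, IsLeast {p : ℤ | f ^ p * (g ^ n)⁻¹ ∈ C} (γ n))
    (A : ℝ)
    (hA : Tendsto (fun n : ℕ => (γ n : ℝ) / n) atTop (nhds A)) :
    A = sInf {x : ℝ | ∃ r : ℤ, ∃ s : ℕ, 0 < s ∧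
      f ^ r * ((g ^ s : D))⁻¹ ∈ C ∧ x = (r : ℝ) / s} :=
  relative_growth_eq_gamma_star_general C hmul hconj hone f g γ hγ A hA
end

section
/- Let A be an n×n Hermitian matrix whose trace satisfies tr(A) ≥ 2πn. Then there exists a Hermitian matrix A' with e^{iA'} = e^{iA}, tr(A') = tr(A), A' positive semidefinite, and such that any two eigenvalues λᵢ, λⱼ of A' satisfy |λᵢ − λⱼ| ≤ 2πn. -/
open scoped ComplexOrder

open Finset Matrix Unitary

/-!
Reduce every eigenvalue of `A` modulo `2π` into `[0, 2π)`. The multiples of `2π` removed add up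
to an integer `M`, which is handed back as evenly as possible: every eigenvalue receives `q` or
`q + 1` multiples of `2π`, where `q = ⌊M / n⌋`. The new eigenvalues lie in one window
`[2πq, 2πq + 4π)` and have the same sum, so `tr A ≥ 2πn` forces `q ≥ 0`. Putting them back on the
eigenvectors of `A` leaves `e^{iA}` unchanged.
-/

theorem Int.exists_fin_sum_eq_forall_mem_Icc_ediv {n : ℕ} (hn : 0 < n) (M : ℤ) :
    ∃ c : Fin n → ℤ, ∑ i, c i = M ∧ ∀ i, c i ∈ Set.Icc (M / n) (M / n + 1) := by
  set r := (M % n).toNat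
  have hr : (r : ℤ) = M % n := Int.toNat_of_nonneg (Int.emod_nonneg _ (by omega))
  have hrn : r ≤ n := by have := Int.emod_lt_of_pos M (by omega : (0 : ℤ) < n); omega
  refine ⟨fun i => M / n + if (i : ℕ) < r then 1 else 0, ?_, fun i => ?_⟩
  · rw [sum_add_distrib, sum_boole, Fin.card_filter_val_lt, min_eq_right hrn]
    simp only [sum_const, card_univ, Fintype.card_fin, nsmul_eq_mul]
    rw [hr, Int.mul_ediv_add_emod]
  · simp only [Set.mem_Icc]; split_ifs <;> omega

theorem Int.exists_sum_eq_sum_forall_mem_Icc {ι : Type*} [Fintype ι] (m : ι → ℤ) :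
    ∃ c : ι → ℤ, ∑ i, c i = ∑ i, m i ∧ ∃ q : ℤ, ∀ i, c i ∈ Set.Icc q (q + 1) := by
  rcases isEmpty_or_nonempty ι with hι | hι
  · exact ⟨m, rfl, 0, isEmptyElim⟩
  obtain ⟨c, hc, hcq⟩ :=
    Int.exists_fin_sum_eq_forall_mem_Icc_ediv (Fintype.card_pos (α := ι)) (∑ i, m i)
  let e := Fintype.equivFin ι
  exact ⟨c ∘ e, by rw [← hc, ← e.sum_comp]; rfl, _, fun i => hcq (e i)⟩

section PeriodicShift

variable {ι : Type*} [Fintype ι] {p : ℝ}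

theorem exists_add_int_mul_sum_eq_mem_Ico (hp : 0 < p) (x : ι → ℝ) :
    ∃ y : ι → ℝ, (∀ i, ∃ k : ℤ, y i = x i + k * p) ∧ ∑ i, y i = ∑ i, x i ∧
      ∃ q : ℤ, ∀ i, y i ∈ Set.Ico (q * p) ((q + 2) * p) := by
  obtain ⟨c, hc, q, hcq⟩ := Int.exists_sum_eq_sum_forall_mem_Icc fun i => ⌊x i / p⌋
  refine ⟨fun i => x i + (c i - ⌊x i / p⌋ : ℤ) * p, fun i => ⟨_, rfl⟩, ?_, q, fun i => ?_⟩
  · have hc' : ∑ i, (c i : ℝ) = ∑ i, (⌊x i / p⌋ : ℝ) := mod_cast hc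
    simp only [Int.cast_sub, sum_add_distrib, ← sum_mul, sum_sub_distrib, hc', sub_self,
      zero_mul, add_zero]
  · have h0 := Int.sub_floor_div_mul_nonneg (x i) hp
    have h1 := Int.sub_floor_div_mul_lt (x i) hp
    have hlo : (q : ℝ) ≤ c i := mod_cast (hcq i).1
    have hhi : (c i : ℝ) ≤ q + 1 := mod_cast (hcq i).2
    push_cast
    constructor <;> nlinarith

theorem exists_add_int_mul_sum_eq_nonneg_abs_sub_le (hp : 0 < p) (x : ι → ℝ)
    (hx : p * Fintype.card ι ≤ ∑ i, x i) :
    ∃ y : ι → ℝ, (∀ i, ∃ k : ℤ, y i = x i + k * p) ∧ ∑ i, y i = ∑ i, x i ∧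
      (∀ i, 0 ≤ y i) ∧ ∀ i j, |y i - y j| ≤ p * Fintype.card ι := by
  obtain ⟨y, hyx, hsum, q, hq⟩ := exists_add_int_mul_sum_eq_mem_Ico hp x
  simp only [Set.mem_Ico] at hq
  refine ⟨y, hyx, hsum, fun i => ?_, fun i j => ?_⟩
  · have hlt : ∑ j, y j < ∑ _j : ι, (q + 2) * p :=
      sum_lt_sum_of_nonempty ⟨i, mem_univ i⟩ fun j _ => (hq j).2
    rw [sum_const, card_univ, nsmul_eq_mul, hsum] at hlt
    -- with `hx`, this squeezes `p * card ι < (q + 2) * p * card ι`, i.e. `q > -1`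
    have hpos : 0 < ((q : ℝ) + 1) * (p * Fintype.card ι) := by linarith
    have hq1 : (0 : ℝ) < q + 1 := (pos_iff_pos_of_mul_pos hpos).mpr
      (mul_pos hp (Nat.cast_pos.mpr (Fintype.card_pos_iff.mpr ⟨i⟩)))
    have hq0 : 0 ≤ q := by
      have : (0 : ℤ) < q + 1 := by exact_mod_cast hq1
      omega
    exact (mul_nonneg (Int.cast_nonneg_iff.mpr hq0) hp.le).trans (hq i).1
  · rcases le_or_gt (Fintype.card ι) 1 with hcard | hcard
    · rw [Fintype.card_le_one_iff_subsingleton.mp hcard |>.elim i j, sub_self, abs_zero]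
      positivity
    · have h2 : (2 : ℝ) ≤ Fintype.card ι := by exact_mod_cast hcard
      rw [abs_sub_le_iff]
      constructor <;> nlinarith [hq i, hq j]

end PeriodicShift

namespace Matrix

variable {ι : Type*} [Fintype ι] [DecidableEq ι] (U : unitaryGroup ι ℂ) (v : ι → ℝ)

theorem isHermitian_conjStarAlgAut_diagonal :
    (conjStarAlgAut ℂ _ U (diagonal (RCLike.ofReal ∘ v))).IsHermitian :=
  IsSelfAdjoint.map (isHermitian_diagonal_iff.mpr fun i => Complex.conj_ofReal (v i)) _

theorem trace_conjStarAlgAut_diagonal :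
    (conjStarAlgAut ℂ _ U (diagonal (RCLike.ofReal ∘ v))).trace = ∑ i, (v i : ℂ) := by
  rw [conjStarAlgAut_apply, trace_mul_cycle, UnitaryGroup.star_mul_self, one_mul, trace_diagonal]
  rfl

theorem posSemidef_conjStarAlgAut_diagonal (hv : ∀ i, 0 ≤ v i) :
    (conjStarAlgAut ℂ _ U (diagonal (RCLike.ofReal ∘ v))).PosSemidef := by
  rw [conjStarAlgAut_apply, star_eq_conjTranspose]
  exact PosSemidef.mul_mul_conjTranspose_same
    (posSemidef_diagonal_iff.mpr fun i => Complex.zero_le_real.mpr (hv i)) _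

theorem spectrum_conjStarAlgAut_diagonal :
    spectrum ℝ (conjStarAlgAut ℂ _ U (diagonal (RCLike.ofReal ∘ v))) = Set.range v := by
  ext x
  rw [conjStarAlgAut_apply, spectrum_star_right_conjugate, ← spectrum.algebraMap_mem_iff ℂ,
    spectrum_diagonal, RCLike.algebraMap_eq_ofReal]
  simp

theorem exp_I_smul_conjStarAlgAut_diagonal :
    NormedSpace.exp (Complex.I • conjStarAlgAut ℂ _ U (diagonal (RCLike.ofReal ∘ v))) =
      conjStarAlgAut ℂ _ U (diagonal fun i => Complex.exp (Complex.I * v i)) := by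
  have hinv : (U : Matrix ι ι ℂ)⁻¹ = star (U : Matrix ι ι ℂ) := inv_eq_right_inv U.2.2
  have hexp : NormedSpace.exp (Complex.I • (RCLike.ofReal ∘ v)) =
      fun i => Complex.exp (Complex.I * v i) := by
    funext i
    simp [Complex.exp_eq_exp_ℂ]
  rw [conjStarAlgAut_apply, conjStarAlgAut_apply, ← hinv, ← smul_mul_assoc, ← mul_smul_comm,
    ← diagonal_smul, exp_conj (U : Matrix ι ι ℂ) _ (Unitary.toUnits U).isUnit, exp_diagonal, hexp]

end Matrix

/-- If `A` is an `n×n` Hermitian matrix with `tr(A) ≥ 2πn`, there is a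
Hermitian `A'` with `e^{iA'} = e^{iA}`, `tr(A') = tr(A)`, `A'` positive semidefinite,
and all pairs of eigenvalues of `A'` within distance `2πn` of each other. -/
theorem hermitian_log_normalization {n : ℕ}
    (A : Matrix (Fin n) (Fin n) ℂ) (hA : A.IsHermitian)
    (htr : 2 * Real.pi * n ≤ (A.trace).re) :
    ∃ A' : Matrix (Fin n) (Fin n) ℂ, ∃ hA' : A'.IsHermitian,
      NormedSpace.exp (Complex.I • A') = NormedSpace.exp (Complex.I • A) ∧
      A'.trace = A.trace ∧
      A'.PosSemidef ∧
      ∀ i j, |hA'.eigenvalues i - hA'.eigenvalues j| ≤ 2 * Real.pi * n := by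
  have htrA : A.trace = ∑ i, (hA.eigenvalues i : ℂ) := hA.trace_eq_sum_eigenvalues
  rw [htrA, ← Complex.ofReal_sum, Complex.ofReal_re] at htr
  obtain ⟨μ, hshift, hsum, hμ0, hdist⟩ := exists_add_int_mul_sum_eq_nonneg_abs_sub_le
    Real.two_pi_pos hA.eigenvalues (by simpa using htr)
  set U := hA.eigenvectorUnitary
  have hA' := isHermitian_conjStarAlgAut_diagonal U μ
  refine ⟨_, hA', ?_, ?_, posSemidef_conjStarAlgAut_diagonal U μ hμ0, fun i j => ?_⟩
  · conv_rhs => rw [hA.spectral_theorem]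
    rw [exp_I_smul_conjStarAlgAut_diagonal, exp_I_smul_conjStarAlgAut_diagonal]
    congr 2
    funext i
    obtain ⟨k, hk⟩ := hshift i
    exact Complex.exp_eq_exp_iff_exists_int.mpr ⟨k, by rw [hk]; push_cast; ring⟩
  · rw [trace_conjStarAlgAut_diagonal, htrA, ← Complex.ofReal_sum, ← Complex.ofReal_sum, hsum]
  · have hmem := hA'.eigenvalues_mem_spectrum_real
    simp only [spectrum_conjStarAlgAut_diagonal, Set.mem_range] at hmem
    obtain ⟨k, hk⟩ := hmem i
    obtain ⟨l, hl⟩ := hmem j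
    rw [← hk, ← hl]
    simpa using hdist k l
end

section
/- Given real numbers λ₁, ..., λₙ with Σλᵢ ≥ 2πn, there exist real numbers λ'₁, ..., λ'ₙ with λ'ᵢ ≡ λᵢ (mod 2π) for each i, Σλ'ᵢ = Σλᵢ, all λ'ᵢ > 0, and max_{i,j} |λ'ᵢ − λ'ⱼ| ≤ 2πn. -/
/-!
Reduce every `λᵢ` into `(0, 2π]`. The reduced values sum to at most `2πn ≤ Σ λᵢ`, so the
total lost is `2πK` with `K ≥ 0`. Hand the `K` periods back as evenly as possible, at most one
apart: two resulting values then differ by less than `2π + 2π`, which is at most `2πn` as soon as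
there are two distinct indices.
-/

open Finset

section Balanced

variable {ι : Type*} [Fintype ι] [Nonempty ι]

theorem exists_sum_eq_forall_le_add_one (K : ℕ) :
    ∃ q : ι → ℕ, ∑ i, q i = K ∧ ∀ i j, q i ≤ q j + 1 := by
  classical
  induction K with
  | zero => exact ⟨0, by simp⟩
  | succ K ih =>
    obtain ⟨q, hq_sum, hq_le⟩ := ih
    obtain ⟨i₀, -, hi₀⟩ := exists_min_image univ q univ_nonempty
    refine ⟨q + Pi.single i₀ 1, by simp [sum_add_distrib, hq_sum], fun i j => ?_⟩
    have hmin := hi₀ j (mem_univ j)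
    have hij := hq_le i j
    have hii₀ := hq_le i i₀
    simp only [Pi.add_apply, Pi.single_apply]
    split_ifs <;> subst_vars <;> omega

theorem exists_pos_sum_eq_abs_sub_lt {p : ℝ} (hp : 0 < p) (x : ι → ℝ)
    (hx : p * Fintype.card ι ≤ ∑ i, x i) :
    ∃ y : ι → ℝ, (∀ i, ∃ k : ℤ, y i - x i = p * k) ∧ ∑ i, y i = ∑ i, x i ∧
      (∀ i, 0 < y i) ∧ ∀ i j, |y i - y j| < 2 * p := by
  set r : ι → ℝ := fun i => toIocMod hp 0 (x i)
  set K : ℤ := ∑ i, toIocDiv hp 0 (x i)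
  have hr : ∀ i, r i ∈ Set.Ioc 0 p := fun i => by
    simpa using toIocMod_mem_Ioc hp 0 (x i)
  have hx_split : ∑ i, x i = ∑ i, r i + p * K := by
    simp only [K, Int.cast_sum, mul_sum, ← sum_add_distrib]
    exact sum_congr rfl fun i _ => by linarith [self_sub_toIocMod_eq_mul hp 0 (x i)]
  have hK : 0 ≤ K := by
    have hr_sum : ∑ i, r i ≤ p * Fintype.card ι := by
      simpa [mul_comm] using sum_le_sum fun i (_ : i ∈ univ) => (hr i).2
    have : 0 ≤ p * K := by linarith
    exact_mod_cast nonneg_of_mul_nonneg_right this hp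
  lift K to ℕ using hK with K
  obtain ⟨q, hq_sum, hq_le⟩ := exists_sum_eq_forall_le_add_one (ι := ι) K
  refine ⟨fun i => r i + p * q i, fun i => ⟨q i - toIocDiv hp 0 (x i), ?_⟩, ?_, ?_, ?_⟩
  · push_cast
    linarith [self_sub_toIocMod_eq_mul hp 0 (x i)]
  · simp [sum_add_distrib, ← mul_sum, hx_split, ← hq_sum, r]
  · intro i
    have := (hr i).1
    positivity
  · intro i j
    have hij : p * q i ≤ p * (q j + 1) :=
      mul_le_mul_of_nonneg_left (by exact_mod_cast hq_le i j) hp.le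
    have hji : p * q j ≤ p * (q i + 1) :=
      mul_le_mul_of_nonneg_left (by exact_mod_cast hq_le j i) hp.le
    obtain ⟨hri₀, hri₁⟩ := hr i
    obtain ⟨hrj₀, hrj₁⟩ := hr j
    rw [abs_sub_lt_iff]
    constructor <;> dsimp only <;> linarith

end Balanced

/-- Given reals `λ₁, ..., λₙ` with `Σλᵢ ≥ 2πn`, there are reals
`λ'₁, ..., λ'ₙ` with `λ'ᵢ ≡ λᵢ (mod 2π)`, the same sum, all positive, and any two
within distance `2πn` of each other. -/
theorem eigenvalue_redistribution {n : ℕ} (hn : 1 ≤ n) (lam : Fin n → ℝ)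
    (hsum : 2 * Real.pi * n ≤ ∑ i, lam i) :
    ∃ lam' : Fin n → ℝ,
      (∀ i, ∃ k : ℤ, lam' i - lam i = 2 * Real.pi * k) ∧
      (∑ i, lam' i) = (∑ i, lam i) ∧
      (∀ i, 0 < lam' i) ∧
      (∀ i j, |lam' i - lam' j| ≤ 2 * Real.pi * n) := by
  have : Nonempty (Fin n) := ⟨⟨0, hn⟩⟩
  obtain ⟨lam', hmod, hsum', hpos, hspread⟩ :=
    exists_pos_sum_eq_abs_sub_lt Real.two_pi_pos lam (by simpa using hsum)
  refine ⟨lam', hmod, hsum', hpos, fun i j => ?_⟩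
  rcases eq_or_ne i j with rfl | hij
  · simpa using by positivity
  · have h2n : (2 : ℝ) ≤ n := by exact_mod_cast Fin.nontrivial_iff_two_le.mp ⟨i, j, hij⟩
    nlinarith [hspread i j, Real.pi_pos]
end

section
/- Let f(t) = tan(π/4 + at) with |a| < π/4, let F(t) = diag(f(t), 1/f(t)), and let U(t) be the rotation matrix by angle 2πt. Then the path X(t) = U(t)F(t)U(t) in Sp(2,ℝ) is generated by a pointwise positive-definite Hamiltonian; i.e., the symmetric matrix H_X(t) defined by Ẋ X⁻¹ = J H_X is positive definite for all t. -/
open Real Matrix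

/-!
Write `X = U F U` and `U = cos(2πt) + sin(2πt) J`. Since `U̇ = 2π J U`, `U` commutes with `J`
and `U Uᵀ = 1`, solving `J H (U F U) = Ẋ` for `H` gives `H = U (2π (1 + F⁻²) + H_F) Uᵀ` with
`H_F = -J Ḟ F⁻¹`, whose off-diagonal entries are `-f'/f`. As `tan' = 1 + tan²`, we have
`f' = a (1 + f²)`, so `f'/f = a (f + f⁻¹)` and the conjugated matrix has positive diagonal and
determinant `(f + f⁻¹)² (4π² - a²) > 0`.
-/

def HasMatrixDerivAt {m n : Type*} (A : ℝ → Matrix m n ℝ) (A' : Matrix m n ℝ) (t : ℝ) : Prop :=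
  ∀ i j, HasDerivAt (fun s => A s i j) (A' i j) t

namespace HasMatrixDerivAt

variable {l m n : Type*} {A : ℝ → Matrix l m ℝ} {B : ℝ → Matrix m n ℝ} {A' A'' : Matrix l m ℝ}
  {B' : Matrix m n ℝ} {t : ℝ}

theorem unique (h₁ : HasMatrixDerivAt A A' t) (h₂ : HasMatrixDerivAt A A'' t) : A' = A'' :=
  Matrix.ext fun i j => (h₁ i j).unique (h₂ i j)

theorem mul [Fintype m] (hA : HasMatrixDerivAt A A' t) (hB : HasMatrixDerivAt B B' t) :
    HasMatrixDerivAt (fun s => A s * B s) (A' * B t + A t * B') t := by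
  intro i j
  simp only [mul_apply, Matrix.add_apply, ← Finset.sum_add_distrib]
  exact HasDerivAt.fun_sum fun k _ => (hA i k).mul (hB k j)

end HasMatrixDerivAt

theorem hasMatrixDerivAt_diagonal {n : Type*} [DecidableEq n] {d : ℝ → n → ℝ} {d' : n → ℝ}
    {t : ℝ} (hd : ∀ i, HasDerivAt (fun s => d s i) (d' i) t) :
    HasMatrixDerivAt (fun s => diagonal (d s)) (diagonal d') t := by
  intro i j
  by_cases h : i = j
  · subst h
    simpa using hd i
  · simpa [diagonal_apply_ne _ h] using hasDerivAt_const t (0 : ℝ)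

theorem hasMatrixDerivAt_diagonal_self_inv {f : ℝ → ℝ} {f' t : ℝ} (hf : HasDerivAt f f' t)
    (h0 : f t ≠ 0) :
    HasMatrixDerivAt (fun s => diagonal ![f s, (f s)⁻¹]) (diagonal ![f', -f' / f t ^ 2]) t := by
  refine hasMatrixDerivAt_diagonal fun i => ?_
  fin_cases i
  exacts [hf, hf.inv h0]

theorem hasDerivAt_tan_add_mul {a b t : ℝ} (h : cos (b + a * t) ≠ 0) :
    HasDerivAt (fun s => tan (b + a * s)) (a * (1 + tan (b + a * t) ^ 2)) t := by
  have hlin : HasDerivAt (fun s => b + a * s) a t := by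
    simpa using ((hasDerivAt_id t).const_mul a).const_add b
  refine ((hasDerivAt_tan h).comp t hlin).congr_deriv ?_
  rw [one_div, ← inv_one_add_tan_sq h, inv_inv, mul_comm]

theorem hamiltonian_eq_conj {R : Type*} [Ring R] [Algebra ℝ R] {J U V F G F' H : R} (c : ℝ)
    (hJ : J * J = -1) (hUV : U * V = 1) (hVU : V * U = 1) (hJU : J * U = U * J) (hFG : F * G = 1)
    (h : J * H * (U * F * U) = (c • (J * U) * F + U * F') * U + U * F * (c • (J * U))) :
    H = U * (c • 1 - J * F' * G - c • (J * F * J * G)) * V := by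
  have hJU' (x : R) : J * (U * x) = U * (J * x) := by rw [← mul_assoc, hJU, mul_assoc]
  have hVU' (x : R) : V * (U * x) = x := by rw [← mul_assoc, hVU, one_mul]
  have hJ' (x : R) : J * (J * x) = -x := by rw [← mul_assoc, hJ, neg_one_mul]
  have hFG' (x : R) : x * (F * G) = x := by rw [hFG, mul_one]
  -- in the frame rotating with `U` the equation becomes `J K F = c J F + F' + c F J`
  set K := V * H * U
  have hH : H = U * K * V := by
    simp only [K, mul_assoc, hUV, mul_one, ← mul_assoc U V, one_mul]
  have hconj : U * (J * K * F * U) = U * ((c • (J * F) + F' + c • (F * J)) * U) := calc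
    U * (J * K * F * U) = J * H * (U * F * U) := by simp only [hH, mul_assoc, hVU', hJU']
    _ = _ := h
    _ = _ := by simp only [add_mul, mul_add, smul_mul_assoc, mul_smul_comm, mul_assoc, hJU]
  have hK : J * K * F = c • (J * F) + F' + c • (F * J) := by
    simpa only [mul_assoc, hVU', hUV, mul_one] using congrArg (V * · * V) hconj
  have hK' : K = c • 1 - J * F' * G - c • (J * F * J * G) := calc
    K = -(J * (J * K * F) * G) := by simp only [mul_assoc, hJ', neg_mul, hFG', neg_neg]
    _ = _ := by
      rw [hK]
      simp only [add_mul, mul_add, smul_mul_assoc, mul_smul_comm, mul_assoc, hJ', neg_mul, hFG]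
      module
  rw [hH, hK']

section ComplexStructure

variable {n : Type*} [Fintype n] [DecidableEq n] {J : Matrix n n ℝ}

theorem hasMatrixDerivAt_cos_smul_one_add_sin_smul (hJ : J * J = -1) (ω t : ℝ) :
    HasMatrixDerivAt (fun s => cos (ω * s) • (1 : Matrix n n ℝ) + sin (ω * s) • J)
      (ω • (J * (cos (ω * t) • 1 + sin (ω * t) • J))) t := by
  have hω : HasDerivAt (fun s => ω * s) ω t := by simpa using (hasDerivAt_id t).const_mul ω
  have hJU : J * (cos (ω * t) • 1 + sin (ω * t) • J) = cos (ω * t) • J - sin (ω * t) • 1 := by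
    rw [mul_add, mul_smul_comm, mul_smul_comm, hJ, mul_one, smul_neg, sub_eq_add_neg]
  rw [hJU]
  intro i j
  refine ((hω.cos.mul_const ((1 : Matrix n n ℝ) i j)).add
    (hω.sin.mul_const (J i j))).congr_deriv ?_
  simp only [Matrix.smul_apply, Matrix.sub_apply, smul_eq_mul]
  ring

theorem cos_smul_one_add_sin_smul_mul_conjTranspose_self (hJ : J * J = -1) (hJT : Jᴴ = -J)
    (θ : ℝ) : (cos θ • 1 + sin θ • J) * (cos θ • 1 + sin θ • J)ᴴ = 1 := by
  rw [conjTranspose_add, conjTranspose_smul, conjTranspose_smul, conjTranspose_one, hJT]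
  simp only [star_trivial, add_mul, mul_add, smul_mul_smul_comm, mul_one, one_mul, mul_neg,
    smul_neg, hJ]
  calc _ = (cos θ ^ 2 + sin θ ^ 2) • (1 : Matrix n n ℝ) := by module
    _ = 1 := by rw [cos_sq_add_sin_sq, one_smul]

theorem isUnit_cos_smul_one_add_sin_smul (hJ : J * J = -1) (hJT : Jᴴ = -J) (θ : ℝ) :
    IsUnit (cos θ • 1 + sin θ • J) :=
  have h := cos_smul_one_add_sin_smul_mul_conjTranspose_self hJ hJT θ
  ⟨⟨_, _, h, mul_eq_one_comm.mp h⟩, rfl⟩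

theorem hamiltonian_eq_conj_of_hasMatrixDerivAt (hJ : J * J = -1) (hJT : Jᴴ = -J)
    {F : ℝ → Matrix n n ℝ} {F' G H : Matrix n n ℝ} {ω t : ℝ} (hF : HasMatrixDerivAt F F' t)
    (hFG : F t * G = 1)
    (hX : HasMatrixDerivAt
      (fun s => (cos (ω * s) • 1 + sin (ω * s) • J) * F s * (cos (ω * s) • 1 + sin (ω * s) • J))
      (J * H * ((cos (ω * t) • 1 + sin (ω * t) • J) * F t * (cos (ω * t) • 1 + sin (ω * t) • J)))
      t) :
    H = (cos (ω * t) • 1 + sin (ω * t) • J) * (ω • 1 - J * F' * G - ω • (J * F t * J * G))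
      * (cos (ω * t) • 1 + sin (ω * t) • J)ᴴ := by
  have hU := hasMatrixDerivAt_cos_smul_one_add_sin_smul hJ ω t
  have hUV := cos_smul_one_add_sin_smul_mul_conjTranspose_self hJ hJT (ω * t)
  have hJU : Commute J (cos (ω * t) • 1 + sin (ω * t) • J) :=
    ((Commute.one_right J).smul_right _).add_right ((Commute.refl J).smul_right _)
  exact hamiltonian_eq_conj ω hJ hUV (mul_eq_one_comm.mp hUV) hJU.eq hFG
    (hX.unique ((hU.mul hF).mul hU))

end ComplexStructure

theorem rotationMatrix_eq_cos_smul_one_add_sin_smul (θ : ℝ) :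
    !![cos θ, -sin θ; sin θ, cos θ] = cos θ • 1 + sin θ • !![0, -1; 1, 0] := by
  ext i j; fin_cases i <;> fin_cases j <;> simp

theorem posDef_fin_two {p q r : ℝ} (hp : 0 < p) (hdet : 0 < p * r - q ^ 2) :
    (!![p, q; q, r]).PosDef := by
  refine .of_dotProduct_mulVec_pos ?_ fun x hx => ?_
  · ext i j; fin_cases i <;> fin_cases j <;> rfl
  · simp only [dotProduct, mulVec, Fin.sum_univ_two, star_trivial, of_apply, cons_val',
      cons_val_zero, cons_val_one, empty_val', cons_val_fin_one]
    have hsq : p * (x 0 * (p * x 0 + q * x 1) + x 1 * (q * x 0 + r * x 1))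
        = (p * x 0 + q * x 1) ^ 2 + (p * r - q ^ 2) * x 1 ^ 2 := by ring
    refine pos_of_mul_pos_right (hsq ▸ ?_) hp.le
    by_cases h1 : x 1 = 0
    · have h0 : x 0 ≠ 0 := fun h0 => hx (by ext i; fin_cases i <;> simp [h0, h1])
      have := mul_ne_zero hp.ne' h0
      have : 0 < (p * x 0) ^ 2 := by positivity
      simpa [h1] using this
    · have : 0 < x 1 ^ 2 := by positivity
      positivity

theorem posDef_conj_hamiltonian_diagonal {a c f : ℝ} (hf : f ≠ 0) (ha : |a| < c) :
    (c • 1 - !![0, -1; 1, 0] * diagonal ![a * (1 + f ^ 2), -(a * (1 + f ^ 2)) / f ^ 2]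
        * diagonal ![f⁻¹, f] - c • (!![0, -1; 1, 0] * diagonal ![f, f⁻¹] * !![0, -1; 1, 0]
        * diagonal ![f⁻¹, f])).PosDef := by
  have hc : 0 < c := (abs_nonneg a).trans_lt ha
  have hca : 0 < c ^ 2 - a ^ 2 := by
    nlinarith [sq_lt_sq' (abs_lt.mp ha).1 (abs_lt.mp ha).2]
  have hsum : f + f⁻¹ ≠ 0 := by
    have h : f * (f + f⁻¹) = f ^ 2 + 1 := by field_simp
    exact right_ne_zero_of_mul (h ▸ by positivity : f * (f + f⁻¹) ≠ 0)
  have hdet : 0 < c * (1 + f⁻¹ ^ 2) * (c * (1 + f ^ 2)) - (-(a * (f + f⁻¹))) ^ 2 := calc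
    0 < (f + f⁻¹) ^ 2 * (c ^ 2 - a ^ 2) := by positivity
    _ = _ := by field_simp; ring
  convert posDef_fin_two (by positivity) hdet using 1
  simp only [diagonal_vec2, one_fin_two, mul_fin_two]
  ext i j; fin_cases i <;> fin_cases j <;> simp <;> field_simp <;> ring

theorem quarter_pi_add_mul_mem_Ioo {a t : ℝ} (ha : |a| < π / 4) (ht : t ∈ Set.Icc (0 : ℝ) 1) :
    π / 4 + a * t ∈ Set.Ioo 0 (π / 2) := by
  have hat : |a * t| < π / 4 := by
    rw [abs_mul, abs_of_nonneg ht.1]; nlinarith [abs_nonneg a, ht.2]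
  constructor <;> linarith [abs_lt.mp hat]

theorem positive_path_to_diagonal_general (a : ℝ) (ha : |a| < π / 4)
    (f : ℝ → ℝ) (hf : ∀ t, f t = Real.tan (π / 4 + a * t))
    (F U X : ℝ → Matrix (Fin 2) (Fin 2) ℝ)
    (hF : ∀ t, F t = !![f t, 0; 0, (f t)⁻¹])
    (hU : ∀ t, U t = !![Real.cos (2 * π * t), -Real.sin (2 * π * t);
                        Real.sin (2 * π * t), Real.cos (2 * π * t)])
    (hX : ∀ t, X t = U t * F t * U t)
    (J : Matrix (Fin 2) (Fin 2) ℝ) (hJ : J = !![0, -1; 1, 0])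
    (H : ℝ → Matrix (Fin 2) (Fin 2) ℝ)
    (hder : ∀ t ∈ Set.Icc (0 : ℝ) 1, ∀ i j,
      HasDerivAt (fun s => X s i j) ((J * H t * X t) i j) t) :
    ∀ t ∈ Set.Icc (0 : ℝ) 1, (H t).PosDef := by
  subst hJ
  intro t ht
  have hJJ : !![(0 : ℝ), -1; 1, 0] * !![0, -1; 1, 0] = -1 := by
    ext i j; fin_cases i <;> fin_cases j <;> simp
  have hJT : (!![(0 : ℝ), -1; 1, 0])ᴴ = -!![0, -1; 1, 0] := by
    ext i j; fin_cases i <;> fin_cases j <;> simp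
  obtain ⟨hθ₀, hθ₁⟩ := quarter_pi_add_mul_mem_Ioo ha ht
  have hft : 0 < f t := hf t ▸ tan_pos_of_pos_of_lt_pi_div_two hθ₀ hθ₁
  have hcos : cos (π / 4 + a * t) ≠ 0 := (cos_pos_of_mem_Ioo ⟨by linarith, hθ₁⟩).ne'
  have hfder : HasDerivAt f (a * (1 + f t ^ 2)) t := by
    simpa only [← hf] using hasDerivAt_tan_add_mul hcos
  have hFt (s : ℝ) : F s = diagonal ![f s, (f s)⁻¹] := (hF s).trans (diagonal_vec2 _ _).symm
  have hFder := hasMatrixDerivAt_diagonal_self_inv hfder hft.ne'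
  rw [← funext hFt] at hFder
  have hFG : F t * diagonal ![(f t)⁻¹, f t] = 1 := by
    rw [hFt, diagonal_mul_diagonal, ← diagonal_one]
    congr; ext i; fin_cases i <;> simp [hft.ne']
  have hUt (s : ℝ) : U s = cos (2 * π * s) • 1 + sin (2 * π * s) • !![0, -1; 1, 0] :=
    (hU s).trans (rotationMatrix_eq_cos_smul_one_add_sin_smul _)
  have hXder := hder t ht
  simp only [hX, hUt] at hXder
  rw [hamiltonian_eq_conj_of_hasMatrixDerivAt hJJ hJT hFder hFG hXder, hFt]
  have hM := posDef_conj_hamiltonian_diagonal hft.ne' (c := 2 * π) (by linarith [pi_pos])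
  exact hM.mul_mul_conjTranspose_same
    (vecMul_injective_of_isUnit (isUnit_cos_smul_one_add_sin_smul hJJ hJT _))

/-- With `f(t) = tan(π/4 + at)`, `|a| < π/4`, `F(t) = diag(f(t), 1/f(t))`
and `U(t)` rotation by `2πt`, the path `X(t) = U(t) F(t) U(t)` in `Sp(2,ℝ)` is
generated by a pointwise positive-definite Hamiltonian: any symmetric-matrix-valued
`H` satisfying `Ẋ X⁻¹ = J H` (i.e. `Ẋ = J H X`) is positive definite for all
`t ∈ [0,1]`. -/
theorem positive_path_to_diagonal (a : ℝ) (ha : |a| < π / 4)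
    (f : ℝ → ℝ) (hf : ∀ t, f t = Real.tan (π / 4 + a * t))
    (F U X : ℝ → Matrix (Fin 2) (Fin 2) ℝ)
    (hF : ∀ t, F t = !![f t, 0; 0, (f t)⁻¹])
    (hU : ∀ t, U t = !![Real.cos (2 * π * t), -Real.sin (2 * π * t);
                        Real.sin (2 * π * t), Real.cos (2 * π * t)])
    (hX : ∀ t, X t = U t * F t * U t)
    (J : Matrix (Fin 2) (Fin 2) ℝ) (hJ : J = !![0, -1; 1, 0])
    (H : ℝ → Matrix (Fin 2) (Fin 2) ℝ)
    (hHsymm : ∀ t ∈ Set.Icc (0 : ℝ) 1, (H t).IsSymm)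
    (hder : ∀ t ∈ Set.Icc (0 : ℝ) 1, ∀ i j,
      HasDerivAt (fun s => X s i j) ((J * H t * X t) i j) t) :
    ∀ t ∈ Set.Icc (0 : ℝ) 1, (H t).PosDef :=
  positive_path_to_diagonal_general a ha f hf F U X hF hU hX J hJ H hder
end
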